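/- arXiv:2602.17080 — 4 statements merged into one kernel-verified Lean document; each statement's English description precedes it below -/
import Mathlib

section
/- For μ ∈ (0,1) and a positive integer T, Σ_{t=1}^T 1/(1-μ^t) ≤ T + μ/(1-μ) - (1/ln μ)·ln((1-μ^T)/(1-μ)). -/
/-!
Write `1 / (1 - μ ^ t) = 1 + μ ^ t / (1 - μ ^ t)`. The increments of `t ↦ log (1 - μ ^ t)` dominate
the terms `μ ^ t / (1 - μ ^ t)` up to the factor `-log μ`: both `log x ≥ 1 - x⁻¹` (at `x = μ` and at
`x = (1 - μ ^ (t+1)) / (1 - μ ^ t)`) reduce this to the same rational expression. Summing, the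
increments telescope to `log ((1 - μ ^ T) / (1 - μ))`, and only the term `t = 1` is kept as it is.
-/

open Real Finset

lemma one_div_one_sub_eq_one_add_div {K : Type*} [Field K] {x : K} (hx : x ≠ 1) :
    1 / (1 - x) = 1 + x / (1 - x) := by
  field_simp [sub_ne_zero.mpr hx.symm]
  ring

lemma mul_div_one_sub_mul_mul_neg_log_le {μ a : ℝ} (hμ0 : 0 < μ) (hμ1 : μ ≤ 1) (ha0 : 0 ≤ a)
    (ha1 : a < 1) :
    μ * a / (1 - μ * a) * -log μ ≤ log ((1 - μ * a) / (1 - a)) := by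
  have hμa : μ * a < 1 := by nlinarith
  have hlog_μ : -log μ ≤ μ⁻¹ - 1 := by linarith [one_sub_inv_le_log_of_pos hμ0]
  have hlog_q := one_sub_inv_le_log_of_pos
    (show 0 < (1 - μ * a) / (1 - a) from div_pos (by linarith) (by linarith))
  calc μ * a / (1 - μ * a) * -log μ
      ≤ μ * a / (1 - μ * a) * (μ⁻¹ - 1) :=
        mul_le_mul_of_nonneg_left hlog_μ (div_nonneg (by positivity) (by linarith))
    _ = 1 - ((1 - μ * a) / (1 - a))⁻¹ := by
        field_simp [(by linarith : 1 - μ * a ≠ 0), (by linarith : 1 - a ≠ 0)]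
        ring
    _ ≤ log ((1 - μ * a) / (1 - a)) := hlog_q

lemma sum_Icc_pow_div_one_sub_pow_mul_neg_log_le {μ : ℝ} (hμ0 : 0 < μ) (hμ1 : μ < 1) {T : ℕ}
    (hT : 1 ≤ T) :
    (∑ t ∈ Icc 1 T, μ ^ t / (1 - μ ^ t)) * -log μ
      ≤ μ / (1 - μ) * -log μ + log ((1 - μ ^ T) / (1 - μ)) := by
  induction T, hT using Nat.le_induction with
  | base => simp [div_self (by linarith : 1 - μ ≠ 0)]
  | succ T hT ih =>
    have hμT : μ ^ T < 1 := pow_lt_one₀ hμ0.le hμ1 (by omega)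
    have hμT' : μ ^ (T + 1) < 1 := pow_lt_one₀ hμ0.le hμ1 (by omega)
    have hstep := mul_div_one_sub_mul_mul_neg_log_le hμ0 hμ1.le (by positivity) hμT
    rw [← pow_succ', log_div (by linarith) (by linarith)] at hstep
    rw [sum_Icc_succ_top (by omega), add_mul, log_div (by linarith) (by linarith)]
    rw [log_div (by linarith) (by linarith)] at ih
    linarith

theorem stmt3 (μ : ℝ) (hμ0 : 0 < μ) (hμ1 : μ < 1) (T : ℕ) (hT : 0 < T) :
    ∑ t ∈ Finset.Icc 1 T, 1 / (1 - μ ^ t)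
      ≤ (T : ℝ) + μ / (1 - μ) - (1 / Real.log μ) * Real.log ((1 - μ ^ T) / (1 - μ)) := by
  have hL : 0 < -log μ := neg_pos.mpr (log_neg hμ0 hμ1)
  have hsplit : ∑ t ∈ Icc 1 T, 1 / (1 - μ ^ t) = T + ∑ t ∈ Icc 1 T, μ ^ t / (1 - μ ^ t) := by
    rw [sum_congr rfl fun t ht => one_div_one_sub_eq_one_add_div
      (pow_lt_one₀ hμ0.le hμ1 (by simp at ht; omega)).ne]
    simp [sum_add_distrib]
  have htele := sum_Icc_pow_div_one_sub_pow_mul_neg_log_le hμ0 hμ1 hT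
  have hsum : ∑ t ∈ Icc 1 T, μ ^ t / (1 - μ ^ t)
      ≤ μ / (1 - μ) + log ((1 - μ ^ T) / (1 - μ)) / -log μ := by
    rw [← sub_le_iff_le_add', le_div_iff₀ hL]
    linarith
  have hcoeff : (1 / log μ) * log ((1 - μ ^ T) / (1 - μ))
      = -(log ((1 - μ ^ T) / (1 - μ)) / -log μ) := by ring
  rw [hsplit, hcoeff]
  linarith
end

section
/- For μ ∈ (0,1) and a positive integer T, Σ_{t=1}^T 1/√(1-μ^t) ≤ T - 2·ln(1+√(1-μ^T))/ln μ. -/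
/-!
The map `F x = x - 2 log(1 + √(1 - μ^x)) / log μ` is an antiderivative of the decreasing function
`x ↦ 1 / √(1 - μ^x)` on `(0, ∞)`, with `F 0 = 0`. By the mean value theorem each term of the sum
is at most the increment of `F` over the preceding unit interval, and the increments telescope.
-/

open Real Finset Set

theorem sum_Icc_le_sub_of_hasDerivAt_of_antitoneOn {F f : ℝ → ℝ} (hF : ContinuousOn F (Ici 0))
    (hderiv : ∀ x > 0, HasDerivAt F (f x) x) (hf : AntitoneOn f (Ioi 0)) (T : ℕ) :
    ∑ t ∈ Icc 1 T, f t ≤ F T - F 0 := by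
  have step (n : ℕ) : f (n + 1) ≤ F (n + 1) - F n := by
    have hn : (n : ℝ) < n + 1 := lt_add_one _
    obtain ⟨c, hc, hslope⟩ := exists_hasDerivAt_eq_slope F f hn
      (hF.mono (Icc_subset_Ici_self.trans (Ici_subset_Ici.2 n.cast_nonneg)))
      fun x hx => hderiv x (n.cast_nonneg.trans_lt hx.1)
    have hc0 : 0 < c := n.cast_nonneg.trans_lt hc.1
    calc f (n + 1) ≤ f c := hf hc0 (hc0.trans hc.2) hc.2.le
      _ = F (n + 1) - F n := by rw [hslope, add_sub_cancel_left, div_one]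
  induction T with
  | zero => simp
  | succ T ih =>
    rw [sum_Icc_succ_top (Nat.le_add_left 1 T), Nat.cast_succ]
    linarith [step T]

theorem antitoneOn_one_div_sqrt_one_sub_rpow {μ : ℝ} (hμ0 : 0 < μ) (hμ1 : μ < 1) :
    AntitoneOn (fun x : ℝ => 1 / √(1 - μ ^ x)) (Ioi 0) := by
  intro x hx y _ hxy
  have hpos : 0 < √(1 - μ ^ x) := sqrt_pos.2 (sub_pos.2 (rpow_lt_one hμ0.le hμ1 hx))
  exact one_div_le_one_div_of_le hpos
    (sqrt_le_sqrt (sub_le_sub_left (rpow_le_rpow_of_exponent_ge hμ0 hμ1.le hxy) 1))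

theorem continuous_sub_two_mul_log_one_add_sqrt_one_sub_rpow_div_log {μ : ℝ} (hμ0 : 0 < μ) :
    Continuous fun x : ℝ => x - 2 * log (1 + √(1 - μ ^ x)) / log μ := by
  have hrpow : Continuous fun x : ℝ => μ ^ x :=
    continuous_const.rpow continuous_id fun _ => Or.inl hμ0.ne'
  have hlog : Continuous fun x : ℝ => log (1 + √(1 - μ ^ x)) :=
    Continuous.log (by fun_prop) fun _ => by positivity
  exact continuous_id.sub ((continuous_const.mul hlog).div_const _)

theorem hasDerivAt_sub_two_mul_log_one_add_sqrt_one_sub_rpow_div_log {μ x : ℝ} (hμ0 : 0 < μ)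
    (hμ1 : μ < 1) (hx : 0 < x) :
    HasDerivAt (fun y : ℝ => y - 2 * log (1 + √(1 - μ ^ y)) / log μ) (1 / √(1 - μ ^ x)) x := by
  have hpos : 0 < 1 - μ ^ x := sub_pos.2 (rpow_lt_one hμ0.le hμ1 hx)
  set s := √(1 - μ ^ x) with hs
  have hs0 : 0 < s := sqrt_pos.2 hpos
  have hs2 : s ^ 2 = 1 - μ ^ x := sq_sqrt hpos.le
  have hinner : HasDerivAt (fun y : ℝ => 1 + √(1 - μ ^ y)) (-(μ ^ x * log μ) / (2 * s)) x := by
    have := ((hasStrictDerivAt_const_rpow hμ0 x).hasDerivAt.const_sub 1).sqrt hpos.ne'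
    simpa using this.const_add 1
  have hF := (hasDerivAt_id x).sub (((hinner.log (by positivity)).const_mul 2).div_const (log μ))
  rw [← hs] at hF
  refine hF.congr_deriv ?_
  -- `μ ^ x = 1 - s ^ 2 = (1 - s) (1 + s)`, so the derivative is `1 + (1 - s) / s = 1 / s`.
  field_simp [(log_neg hμ0 hμ1).ne]
  linear_combination hs2

theorem stmt4_general (μ : ℝ) (hμ0 : 0 < μ) (hμ1 : μ < 1) (T : ℕ) :
    ∑ t ∈ Finset.Icc 1 T, 1 / Real.sqrt (1 - μ ^ t)
      ≤ (T : ℝ) - 2 * Real.log (1 + Real.sqrt (1 - μ ^ T)) / Real.log μ := by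
  have h := sum_Icc_le_sub_of_hasDerivAt_of_antitoneOn
    (continuous_sub_two_mul_log_one_add_sqrt_one_sub_rpow_div_log hμ0).continuousOn
    (fun x hx => hasDerivAt_sub_two_mul_log_one_add_sqrt_one_sub_rpow_div_log hμ0 hμ1 hx)
    (antitoneOn_one_div_sqrt_one_sub_rpow hμ0 hμ1) T
  simpa [rpow_natCast] using h

theorem stmt4 (μ : ℝ) (hμ0 : 0 < μ) (hμ1 : μ < 1) (T : ℕ) (hT : 0 < T) :
    ∑ t ∈ Finset.Icc 1 T, 1 / Real.sqrt (1 - μ ^ t)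
      ≤ (T : ℝ) - 2 * Real.log (1 + Real.sqrt (1 - μ ^ T)) / Real.log μ :=
  stmt4_general μ hμ0 hμ1 T
end

section
/- Let M ∈ ℝ^{m×n} have reduced singular value decomposition M = UΣVᵀ and let O = UVᵀ. Let D = diag(d₁,…,d_n) with all d_i ≥ 0, and let d_min = min_i d_i. Then ⟨M, OD⟩ ≥ d_min·‖M‖_*, where ⟨A,B⟩ = Tr(AᵀB) and ‖M‖_* is the nuclear norm (sum of singular values) of M. -/
open Matrix

theorem stmt5 {m n r : ℕ} (M : Matrix (Fin m) (Fin n) ℝ)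
    (U : Matrix (Fin m) (Fin r) ℝ) (S : Matrix (Fin r) (Fin r) ℝ)
    (V : Matrix (Fin n) (Fin r) ℝ)
    (hU : Uᵀ * U = 1) (hV : Vᵀ * V = 1)
    (hSdiag : ∀ i j, i ≠ j → S i j = 0) (hSnonneg : ∀ i, 0 ≤ S i i)
    (hM : M = U * S * Vᵀ)
    (dvec : Fin n → ℝ) (hd : ∀ i, 0 ≤ dvec i)
    (dmin : ℝ) (hmin : IsLeast (Set.range dvec) dmin) :
    dmin * ∑ i, S i i ≤ Matrix.trace (Mᵀ * (U * Vᵀ * Matrix.diagonal dvec)) := by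
  have hmle : ∀ k, dmin ≤ dvec k := fun k => hmin.2 ⟨k, rfl⟩
  -- simplify the matrix product
  have h1 : Mᵀ * (U * Vᵀ * Matrix.diagonal dvec)
      = V * Sᵀ * Vᵀ * Matrix.diagonal dvec := by
    rw [hM]
    simp only [Matrix.transpose_mul, Matrix.transpose_transpose]
    simp only [Matrix.mul_assoc]
    rw [← Matrix.mul_assoc Uᵀ U, hU, Matrix.one_mul]
  rw [h1]
  have h2 : Matrix.trace (V * Sᵀ * Vᵀ * Matrix.diagonal dvec)
      = Matrix.trace (Sᵀ * (Vᵀ * Matrix.diagonal dvec * V)) := by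
    calc (V * Sᵀ * Vᵀ * Matrix.diagonal dvec).trace
        = (Matrix.diagonal dvec * (V * Sᵀ * Vᵀ)).trace := Matrix.trace_mul_comm _ _
      _ = ((Matrix.diagonal dvec * (V * Sᵀ)) * Vᵀ).trace := by
          simp only [Matrix.mul_assoc]
      _ = (Vᵀ * (Matrix.diagonal dvec * (V * Sᵀ))).trace := Matrix.trace_mul_comm _ _
      _ = ((Vᵀ * Matrix.diagonal dvec * V) * Sᵀ).trace := by
          simp only [Matrix.mul_assoc]
      _ = (Sᵀ * (Vᵀ * Matrix.diagonal dvec * V)).trace := Matrix.trace_mul_comm _ _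
  rw [h2]
  set W := Vᵀ * Matrix.diagonal dvec * V with hW
  have h3 : Matrix.trace (Sᵀ * W) = ∑ i, S i i * W i i := by
    rw [Matrix.trace]
    apply Finset.sum_congr rfl
    intro i _
    rw [Matrix.diag_apply, Matrix.mul_apply]
    rw [Finset.sum_eq_single i]
    · simp [Matrix.transpose_apply]
    · intro j _ hj
      simp [Matrix.transpose_apply, hSdiag j i hj]
    · intro h; exact absurd (Finset.mem_univ i) h
  rw [h3]
  have hWdiag : ∀ i, W i i = ∑ k, dvec k * (V k i * V k i) := by
    intro i
    rw [hW, Matrix.mul_apply]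
    apply Finset.sum_congr rfl
    intro k _
    rw [Matrix.mul_apply, Finset.sum_eq_single k]
    · simp [Matrix.diagonal, Matrix.transpose_apply]; ring
    · intro j _ hj; simp [Matrix.diagonal_apply_ne _ hj]
    · intro h; exact absurd (Finset.mem_univ k) h
  have hVnorm : ∀ i, ∑ k, V k i * V k i = 1 := by
    intro i
    have := congrFun (congrFun hV i) i
    rw [Matrix.mul_apply] at this
    simp only [Matrix.transpose_apply, Matrix.one_apply_eq] at this
    exact this
  have hWge : ∀ i, dmin ≤ W i i := by
    intro i
    rw [hWdiag i]
    calc dmin = ∑ k, dmin * (V k i * V k i) := by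
          rw [← Finset.mul_sum, hVnorm i, mul_one]
      _ ≤ ∑ k, dvec k * (V k i * V k i) := by
          apply Finset.sum_le_sum
          intro k _
          exact mul_le_mul_of_nonneg_right (hmle k) (mul_self_nonneg _)
  rw [Finset.mul_sum]
  apply Finset.sum_le_sum
  intro i _
  rw [mul_comm]
  exact mul_le_mul_of_nonneg_left (hWge i) (hSnonneg i)
end

section
/- Let x₁,…,x_T ≥ 0 and ε > 0, and define φ_ε(x) = x²/(x+ε). Then (1/T)Σ_{t=1}^T x_t ≤ (1/T)Σ_{t=1}^T φ_ε(x_t) + √(ε)·√((1/T)Σ_{t=1}^T φ_ε(x_t)). -/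
/-!
Pointwise, `x - φ_ε(x) = x ε / (x + ε)`, whose square is at most `ε φ_ε(x)` because
`ε ≤ x + ε`; hence `x ≤ φ_ε(x) + √(ε φ_ε(x))`. Averaging this bound and applying
Cauchy–Schwarz in the form `(∑ √aₜ)² ≤ T ∑ aₜ` gives the averaged inequality.
-/

open Finset

lemma le_sq_div_add_sqrt_mul_sqrt {x ε : ℝ} (hx : 0 ≤ x) (hε : 0 ≤ ε) :
    x ≤ x ^ 2 / (x + ε) + √ε * √(x ^ 2 / (x + ε)) := by
  rcases hx.eq_or_lt with rfl | hx
  · simp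
  have hd : 0 < x + ε := by linarith
  have hgap : x - x ^ 2 / (x + ε) = x * ε / (x + ε) := by
    field_simp
    ring
  have hgap_sq : (x * ε / (x + ε)) ^ 2 ≤ ε * (x ^ 2 / (x + ε)) := by
    have : ε * (x ^ 2 / (x + ε)) - (x * ε / (x + ε)) ^ 2 = ε * x ^ 2 * x / (x + ε) ^ 2 := by
      field_simp
      ring
    nlinarith [show 0 ≤ ε * x ^ 2 * x / (x + ε) ^ 2 by positivity]
  have := Real.le_sqrt_of_sq_le hgap_sq
  rw [← Real.sqrt_mul hε]
  linarith

lemma average_sqrt_le_sqrt_average {ι : Type*} (s : Finset ι) {f : ι → ℝ}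
    (hf : ∀ i ∈ s, 0 ≤ f i) :
    1 / (#s : ℝ) * ∑ i ∈ s, √(f i) ≤ √(1 / (#s : ℝ) * ∑ i ∈ s, f i) := by
  refine Real.le_sqrt_of_sq_le ?_
  have hcs : (∑ i ∈ s, √(f i)) ^ 2 ≤ #s * ∑ i ∈ s, f i := by
    have hsq : ∑ i ∈ s, √(f i) ^ 2 = ∑ i ∈ s, f i := sum_congr rfl fun i hi ↦ Real.sq_sqrt (hf i hi)
    simpa only [hsq] using sq_sum_le_card_mul_sum_sq (s := s) (f := fun i ↦ √(f i))
  have hcard : (1 / (#s : ℝ)) ^ 2 * #s = 1 / #s := by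
    rcases eq_or_ne (#s : ℝ) 0 with h | h
    · simp [h]
    · field_simp
  calc (1 / (#s : ℝ) * ∑ i ∈ s, √(f i)) ^ 2
      = (1 / (#s : ℝ)) ^ 2 * (∑ i ∈ s, √(f i)) ^ 2 := by ring
    _ ≤ (1 / (#s : ℝ)) ^ 2 * (#s * ∑ i ∈ s, f i) := by gcongr
    _ = 1 / (#s : ℝ) * ∑ i ∈ s, f i := by rw [← mul_assoc, hcard]

lemma average_le_average_sq_div_add_sqrt_mul_sqrt {ι : Type*} (s : Finset ι) {x : ι → ℝ}
    {ε : ℝ} (hx : ∀ i ∈ s, 0 ≤ x i) (hε : 0 ≤ ε) :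
    1 / (#s : ℝ) * ∑ i ∈ s, x i
      ≤ 1 / (#s : ℝ) * ∑ i ∈ s, x i ^ 2 / (x i + ε)
        + √ε * √(1 / (#s : ℝ) * ∑ i ∈ s, x i ^ 2 / (x i + ε)) := by
  calc 1 / (#s : ℝ) * ∑ i ∈ s, x i
      ≤ 1 / (#s : ℝ) * ∑ i ∈ s, (x i ^ 2 / (x i + ε) + √ε * √(x i ^ 2 / (x i + ε))) := by
        gcongr with i hi
        exact le_sq_div_add_sqrt_mul_sqrt (hx i hi) hε
    _ = 1 / (#s : ℝ) * ∑ i ∈ s, x i ^ 2 / (x i + ε)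
          + √ε * (1 / (#s : ℝ) * ∑ i ∈ s, √(x i ^ 2 / (x i + ε))) := by
        rw [sum_add_distrib, ← mul_sum]
        ring
    _ ≤ _ := by
        gcongr
        refine average_sqrt_le_sqrt_average s fun i hi ↦ ?_
        have := hx i hi
        positivity

theorem stmt17_general {T : ℕ} (x : ℕ → ℝ) (ε : ℝ) (hε : 0 < ε)
    (hx : ∀ t ∈ Finset.Icc 1 T, 0 ≤ x t) :
    (1 / (T : ℝ)) * ∑ t ∈ Finset.Icc 1 T, x t
      ≤ (1 / (T : ℝ)) * ∑ t ∈ Finset.Icc 1 T, (x t) ^ 2 / (x t + ε)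
        + Real.sqrt ε *
          Real.sqrt ((1 / (T : ℝ)) * ∑ t ∈ Finset.Icc 1 T, (x t) ^ 2 / (x t + ε)) := by
  have h := average_le_average_sq_div_add_sqrt_mul_sqrt (Finset.Icc 1 T) hx hε.le
  rwa [Nat.card_Icc, Nat.add_sub_cancel] at h

theorem stmt17 {T : ℕ} (hT : 0 < T) (x : ℕ → ℝ) (ε : ℝ) (hε : 0 < ε)
    (hx : ∀ t ∈ Finset.Icc 1 T, 0 ≤ x t) :
    (1 / (T : ℝ)) * ∑ t ∈ Finset.Icc 1 T, x t
      ≤ (1 / (T : ℝ)) * ∑ t ∈ Finset.Icc 1 T, (x t) ^ 2 / (x t + ε)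
        + Real.sqrt ε *
          Real.sqrt ((1 / (T : ℝ)) * ∑ t ∈ Finset.Icc 1 T, (x t) ^ 2 / (x t + ε)) :=
  stmt17_general x ε hε hx
end
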